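/- Consider the averaged double-integrator system on ℝ^n × ℝ^n × ℝ^n × ℝ: ġ = v, v̇ = −b·w − λ²(αα')(ψ(g) − η)·∇ψ(g), ẇ = −a·w − κλ·(αα')(ψ(g) − η)·∇ψ(g), η̇ = −h·η + h·ψ(g), with a, λ, b, κ, h > 0, aλ − bκ > 0, α smooth with α·α' strictly increasing and positive, and ψ(g) = |g|²/2. Then the energy function V(g, v, w, η) = (1/2)|v|² + (bκ/(2(aλ − bκ)))·|v − (λ/κ)w|² + λ²(αα')(0)·ψ(g) + λ²·β(ψ(g) − η), where β(z) = ∫₀^z((αα')(s) − (αα')(0))ds, is nonincreasing along every solution; specifically its derivative along solutions equals −h·λ²·β'(ψ(g)−η)·(ψ(g)−η) − (λ/κ²)(aλ − bκ)·(bκ/(aλ−bκ))·|w|² ≤ 0. -/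

import Mathlib

open RealInnerProductSpace

private lemma hasDerivAt_norm_sq' {E : Type*} [NormedAddCommGroup E] [InnerProductSpace ℝ E]
    {u : ℝ → E} {u' : E} {t : ℝ} (hu : HasDerivAt u u' t) :
    HasDerivAt (fun t => ‖u t‖ ^ 2) (2 * ⟪u', u t⟫) t := by
  have h := hu.inner ℝ hu
  have : (fun t => ⟪u t, u t⟫) = fun t => ‖u t‖ ^ 2 := by
    funext s; rw [real_inner_self_eq_norm_sq]
  rw [this] at h
  rw [real_inner_comm u' (u t), ← two_mul] at h
  exact h

/-- Energy decay along solutions of the averaged double-integrator system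
(flat case `G = ℝⁿ`, `R = 0`, `ψ g = |g|²/2`, so `∇ψ(g) = g`).
Here `f = α·α'` and `β z = ∫₀^z (f s - f 0) ds`, so `β' z = f z - f 0`. -/
theorem averaged_double_integrator_energy_decay
    {n : ℕ}
    (a lam b kap h : ℝ)
    (ha : 0 < a) (hlam : 0 < lam) (hb : 0 < b) (hkap : 0 < kap) (hh : 0 < h)
    (hgain : 0 < a * lam - b * kap)
    (α : ℝ → ℝ) (hα : ContDiff ℝ (⊤ : ℕ∞) α)
    (f : ℝ → ℝ) (hf : f = fun z => α z * deriv α z)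
    (hmono : StrictMono f) (hfpos : ∀ z, 0 < f z)
    (ψ : EuclideanSpace ℝ (Fin n) → ℝ) (hψ : ψ = fun g => ‖g‖ ^ 2 / 2)
    (g v w : ℝ → EuclideanSpace ℝ (Fin n)) (η : ℝ → ℝ)
    (hg : ∀ t, HasDerivAt g (v t) t)
    (hv : ∀ t, HasDerivAt v
      (-(b • w t) - (lam ^ 2 * f (ψ (g t) - η t)) • g t) t)
    (hw : ∀ t, HasDerivAt w
      (-(a • w t) - (kap * lam * f (ψ (g t) - η t)) • g t) t)
    (hη : ∀ t, HasDerivAt η (-(h * η t) + h * ψ (g t)) t)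
    (V : ℝ → ℝ)
    (hV : V = fun t =>
      (1 / 2) * ‖v t‖ ^ 2
        + (b * kap / (2 * (a * lam - b * kap))) * ‖v t - (lam / kap) • w t‖ ^ 2
        + lam ^ 2 * f 0 * ψ (g t)
        + lam ^ 2 * ∫ s in (0:ℝ)..(ψ (g t) - η t), (f s - f 0)) :
    (∀ t : ℝ,
      HasDerivAt V
        (-(h * lam ^ 2 * (f (ψ (g t) - η t) - f 0) * (ψ (g t) - η t))
          - (lam / kap ^ 2) * (a * lam - b * kap)
              * (b * kap / (a * lam - b * kap)) * ‖w t‖ ^ 2) t ∧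
      (-(h * lam ^ 2 * (f (ψ (g t) - η t) - f 0) * (ψ (g t) - η t))
          - (lam / kap ^ 2) * (a * lam - b * kap)
              * (b * kap / (a * lam - b * kap)) * ‖w t‖ ^ 2) ≤ 0) ∧
    Antitone V := by
  have hfc : Continuous f := by
    rw [hf]
    exact hα.continuous.mul (hα.continuous_deriv (by simp))
  have hfc' : Continuous fun s => f s - f 0 := hfc.sub continuous_const
  -- sign of β'(z) z
  have hsign : ∀ z : ℝ, 0 ≤ (f z - f 0) * z := by
    intro z
    rcases lt_trichotomy z 0 with h' | h' | h'
    · have := hmono h'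
      nlinarith
    · simp [h']
    · have := hmono h'
      nlinarith
  have key : ∀ t : ℝ,
      HasDerivAt V
        (-(h * lam ^ 2 * (f (ψ (g t) - η t) - f 0) * (ψ (g t) - η t))
          - (lam / kap ^ 2) * (a * lam - b * kap)
              * (b * kap / (a * lam - b * kap)) * ‖w t‖ ^ 2) t := by
    intro t
    set F := f (ψ (g t) - η t) with hF
    -- derivative of ψ ∘ g
    have hψg : HasDerivAt (fun t => ψ (g t)) ⟪v t, g t⟫ t := by
      have h2 := (hasDerivAt_norm_sq' (hg t)).div_const 2
      have heq : (fun t => ‖g t‖ ^ 2 / 2) = fun t => ψ (g t) := by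
        funext s; rw [hψ]
      rw [heq] at h2
      rw [show (2 * ⟪v t, g t⟫ / 2) = ⟪v t, g t⟫ by ring] at h2
      exact h2
    -- derivative of z = ψ(g) - η
    have hz : HasDerivAt (fun t => ψ (g t) - η t)
        (⟪v t, g t⟫ - (-(h * η t) + h * ψ (g t))) t := hψg.sub (hη t)
    -- FTC + chain rule for the integral term
    have hFTC : HasDerivAt (fun x => ∫ s in (0:ℝ)..x, (f s - f 0))
        (f (ψ (g t) - η t) - f 0) (ψ (g t) - η t) :=
      intervalIntegral.integral_hasDerivAt_right
        (hfc'.intervalIntegrable _ _)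
        (hfc'.stronglyMeasurableAtFilter _ _)
        hfc'.continuousAt
    have hInt : HasDerivAt (fun t => ∫ s in (0:ℝ)..(ψ (g t) - η t), (f s - f 0))
        ((F - f 0) * (⟪v t, g t⟫ - (-(h * η t) + h * ψ (g t)))) t :=
      by have := hFTC.comp t hz; exact this
    -- derivatives of quadratic terms
    have h1 : HasDerivAt (fun t => (1 / 2 : ℝ) * ‖v t‖ ^ 2)
        ((1 / 2) * (2 * ⟪-(b • w t) - (lam ^ 2 * F) • g t, v t⟫)) t :=
      (hasDerivAt_norm_sq' (hv t)).const_mul _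
    have hu : HasDerivAt (fun t => v t - (lam / kap) • w t)
        ((-(b • w t) - (lam ^ 2 * F) • g t)
          - (lam / kap) • (-(a • w t) - (kap * lam * F) • g t)) t :=
      (hv t).sub ((hw t).const_smul (lam / kap))
    have h2 : HasDerivAt
        (fun t => (b * kap / (2 * (a * lam - b * kap))) * ‖v t - (lam / kap) • w t‖ ^ 2)
        ((b * kap / (2 * (a * lam - b * kap))) *
          (2 * ⟪(-(b • w t) - (lam ^ 2 * F) • g t)
            - (lam / kap) • (-(a • w t) - (kap * lam * F) • g t),
            v t - (lam / kap) • w t⟫)) t :=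
      (hasDerivAt_norm_sq' hu).const_mul _
    have h3 : HasDerivAt (fun t => lam ^ 2 * f 0 * ψ (g t))
        (lam ^ 2 * f 0 * ⟪v t, g t⟫) t := hψg.const_mul _
    have h4 : HasDerivAt (fun t => lam ^ 2 * ∫ s in (0:ℝ)..(ψ (g t) - η t), (f s - f 0))
        (lam ^ 2 * ((F - f 0) * (⟪v t, g t⟫ - (-(h * η t) + h * ψ (g t))))) t :=
      hInt.const_mul _
    have hsum := ((h1.add h2).add h3).add h4
    rw [hV]
    refine hsum.congr_deriv ?_
    -- now the scalar identity
    have hψt : ψ (g t) = ‖g t‖ ^ 2 / 2 := by rw [hψ]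
    have hη' : -(h * η t) + h * ψ (g t) = h * (ψ (g t) - η t) := by ring
    simp only [inner_sub_left, inner_sub_right, inner_smul_left, inner_smul_right,
      inner_neg_left, real_inner_smul_left, real_inner_smul_right, smul_smul,
      RCLike.conj_to_real, conj_trivial, hη']
    rw [real_inner_comm (v t) (g t), real_inner_self_eq_norm_sq]
    set z := ψ (g t) - η t
    set A := ⟪g t, v t⟫
    set B := ⟪w t, v t⟫
    set C := ⟪g t, w t⟫
    set W := ‖w t‖ ^ 2
    have hD : a * lam - b * kap ≠ 0 := hgain.ne'
    have hk : kap ≠ 0 := hkap.ne'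
    field_simp
    have hD' : -(b * kap) + lam * a ≠ 0 := by intro h0; linarith
    linear_combination (b * B * kap) * mul_inv_cancel₀ hD'
  refine ⟨fun t => ⟨key t, ?_⟩, ?_⟩
  · have h1 := hsign (ψ (g t) - η t)
    have h2 : (0:ℝ) ≤ ‖w t‖ ^ 2 := sq_nonneg _
    have h3 : 0 < lam / kap ^ 2 := div_pos hlam (pow_pos hkap 2)
    have h4 : 0 < b * kap / (a * lam - b * kap) :=
      div_pos (mul_pos hb hkap) hgain
    nlinarith [mul_nonneg (mul_nonneg hh.le (sq_nonneg lam)) h1,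
      mul_nonneg (mul_nonneg (mul_nonneg h3.le hgain.le) h4.le) h2]
  · exact antitone_of_deriv_nonpos (fun t => (key t).differentiableAt)
      (fun t => by
        rw [(key t).deriv]
        have h1 := hsign (ψ (g t) - η t)
        have h2 : (0:ℝ) ≤ ‖w t‖ ^ 2 := sq_nonneg _
        have h3 : 0 < lam / kap ^ 2 := div_pos hlam (pow_pos hkap 2)
        have h4 : 0 < b * kap / (a * lam - b * kap) :=
          div_pos (mul_pos hb hkap) hgain
        nlinarith [mul_nonneg (mul_nonneg hh.le (sq_nonneg lam)) h1,
          mul_nonneg (mul_nonneg (mul_nonneg h3.le hgain.le) h4.le) h2])
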